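/- arXiv:1602.05045 — 5 statements merged into one kernel-verified Lean document; each statement's English description precedes it below -/
import Mathlib

section
/- Every finite word x(0) x(1) ... x(L-1) over the alphabet {0, 1, ..., m-1} of length L ≥ 2^m contains a bad j-pair for some j, i.e., there exist indices i < i' < L and a letter j such that x(i) = x(i') = j and x(i'') < j for all i'' with i < i'' < i'. -/
/-!
Induct on the alphabet size. In a word over `{0, …, m}`, either the top letter `m` occurs twice,
and two consecutive occurrences of it form a bad `m`-pair, or it occurs at most once, and then
one of the two sides of that occurrence is a word over `{0, …, m - 1}` of at least half the length.
-/

section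

variable {α : Type*} [LinearOrder α]

def HasBadPairIn (x : ℕ → α) (a b : ℕ) : Prop :=
  ∃ i i', a ≤ i ∧ i < i' ∧ i' < b ∧ x i = x i' ∧ ∀ k, i < k → k < i' → x k < x i

theorem HasBadPairIn.mono {x : ℕ → α} {a b a' b' : ℕ} (h : HasBadPairIn x a b)
    (ha : a' ≤ a) (hb : b ≤ b') : HasBadPairIn x a' b' := by
  obtain ⟨i, i', hai, hii', hi'b, heq, hlt⟩ := h
  exact ⟨i, i', ha.trans hai, hii', hi'b.trans_le hb, heq, hlt⟩

/-- The bad pair is `i` and the first occurrence of `x i` after `i`. -/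
theorem hasBadPairIn_of_eq_of_le {x : ℕ → α} {a b i i' : ℕ} (hai : a ≤ i) (hii' : i < i')
    (hi'b : i' < b) (heq : x i = x i') (hle : ∀ k, a ≤ k → k < b → x k ≤ x i) :
    HasBadPairIn x a b := by
  classical
  have hex : ∃ r, i < r ∧ x r = x i := ⟨i', hii', heq.symm⟩
  obtain ⟨hir, hxr⟩ := Nat.find_spec hex
  have hri' : Nat.find hex ≤ i' := Nat.find_min' hex ⟨hii', heq.symm⟩
  refine ⟨i, Nat.find hex, hai, hir, by omega, hxr.symm, fun k hik hkr => ?_⟩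
  exact (hle k (by omega) (by omega)).lt_of_ne fun h => Nat.find_min hex hkr ⟨hik, h⟩

end

theorem hasBadPairIn_of_lt_of_two_pow_le {x : ℕ → ℕ} {m a b : ℕ}
    (hx : ∀ k, a ≤ k → k < b → x k < m) (hab : a + 2 ^ m ≤ b) : HasBadPairIn x a b := by
  induction m generalizing a b with
  | zero => exact absurd (hx a le_rfl (by simp at hab; omega)) (Nat.not_lt_zero _)
  | succ m ih =>
    have hpow : 2 ^ (m + 1) = 2 * 2 ^ m := pow_succ' 2 m
    have hle : ∀ k, a ≤ k → k < b → x k ≤ m := fun k hak hkb => Nat.lt_succ_iff.1 (hx k hak hkb)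
    by_cases hm : ∃ p, a ≤ p ∧ p < b ∧ x p = m
    swap
    · push Not at hm
      exact ih (fun k hak hkb => (hle k hak hkb).lt_of_ne (hm k hak hkb)) (by omega)
    obtain ⟨p, hap, hpb, hxp⟩ := hm
    by_cases htwo : ∃ q, a ≤ q ∧ q < b ∧ q ≠ p ∧ x q = m
    · obtain ⟨q, haq, hqb, hqp, hxq⟩ := htwo
      rcases hqp.lt_or_gt with hqp | hpq
      · exact hasBadPairIn_of_eq_of_le haq hqp hpb (hxq.trans hxp.symm)
          fun k hak hkb => (hle k hak hkb).trans_eq hxq.symm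
      · exact hasBadPairIn_of_eq_of_le hap hpq hqb (hxp.trans hxq.symm)
          fun k hak hkb => (hle k hak hkb).trans_eq hxp.symm
    push Not at htwo
    have hlt : ∀ k, a ≤ k → k < b → k ≠ p → x k < m := fun k hak hkb hkp =>
      (hle k hak hkb).lt_of_ne (htwo k hak hkb hkp)
    rcases (show a + 2 ^ m ≤ p ∨ p + 1 + 2 ^ m ≤ b by omega) with hleft | hright
    · exact (ih (fun k hak hkp => hlt k hak (by omega) hkp.ne) hleft).mono le_rfl (by omega)
    · exact (ih (fun k hpk hkb => hlt k (by omega) hkb (by omega)) hright).mono (by omega) le_rfl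

theorem every_long_word_has_bad_pair (m L : ℕ) (x : ℕ → Fin m) (hL : 2 ^ m ≤ L) :
    ∃ (j : Fin m) (i i' : ℕ), i < i' ∧ i' < L ∧ x i = j ∧ x i' = j ∧
      ∀ i'', i < i'' → i'' < i' → x i'' < j := by
  obtain ⟨i, i', -, hii', hi'L, heq, hlt⟩ :=
    hasBadPairIn_of_lt_of_two_pow_le (x := fun k => (x k : ℕ)) (a := 0) (b := L)
      (fun k _ _ => (x k).isLt) (by omega)
  exact ⟨x i, i, i', hii', hi'L, rfl, (Fin.val_injective heq).symm, hlt⟩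
end

section
/- For every n ≥ 0 and every j, the word w_n (defined by w_0 = 0 and w_j = w_{j-1} · j · w_{j-1}) contains no bad j-pair, i.e., there are no positions i < i' with w_n(i) = w_n(i') = j and w_n(i'') < j for all i < i'' < i'. -/
/-!
Any two equal letters of `w_n = w_{n-1} · n · w_{n-1}` are separated by a strictly larger
letter: inside one copy of `w_{n-1}` by induction, and across the two copies by the middle
letter `n`, which exceeds every letter of `w_{n-1}`.
-/

def badWord : ℕ → List ℕ
  | 0 => [0]
  | j + 1 => badWord j ++ [j + 1] ++ badWord j

namespace List

variable {α : Type*}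

def EqLettersSeparated [LT α] (l : List α) : Prop :=
  ∀ (i i' : ℕ) (x : α), i < i' → l[i]? = some x → l[i']? = some x →
    ∃ (k : ℕ) (y : α), i < k ∧ k < i' ∧ l[k]? = some y ∧ x < y

theorem getElem?_append_cons_length_add_succ (u v : List α) (a : α) (m : ℕ) :
    (u ++ a :: v)[u.length + (m + 1)]? = v[m]? := by
  rw [getElem?_append_right (by omega), Nat.add_sub_cancel_left, getElem?_cons_succ]

theorem eqLettersSeparated_singleton [LT α] (a : α) : EqLettersSeparated [a] := by
  intro i i' x hii' _ hi'
  obtain ⟨hi'len, -⟩ := getElem?_eq_some_iff.1 hi'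
  simp only [length_singleton] at hi'len
  omega

theorem EqLettersSeparated.append_cons [Preorder α] {u v : List α} {a : α}
    (hu : EqLettersSeparated u) (hv : EqLettersSeparated v)
    (hua : ∀ x ∈ u, x < a) (hva : ∀ x ∈ v, x < a) :
    EqLettersSeparated (u ++ a :: v) := by
  intro i i' x hii' hi hi'
  rcases lt_trichotomy i u.length with hiu | rfl | hiu
  · rw [getElem?_append_left hiu] at hi
    have hxa := hua x (mem_of_getElem? hi)
    rcases lt_trichotomy i' u.length with hiu' | rfl | hiu'
    · rw [getElem?_append_left hiu'] at hi'
      obtain ⟨k, y, hik, hki', hk, hxy⟩ := hu i i' x hii' hi hi'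
      exact ⟨k, y, hik, hki', by rwa [getElem?_append_left (by omega)], hxy⟩
    · simp only [getElem?_append_right le_rfl, Nat.sub_self, getElem?_cons_zero,
        Option.some.injEq] at hi'
      exact absurd hxa (hi' ▸ lt_irrefl a)
    · exact ⟨u.length, a, hiu, hiu', by simp, hxa⟩
  · simp only [getElem?_append_right le_rfl, Nat.sub_self, getElem?_cons_zero,
      Option.some.injEq] at hi
    obtain ⟨m', rfl⟩ : ∃ m', i' = u.length + (m' + 1) := ⟨i' - u.length - 1, by omega⟩
    rw [getElem?_append_cons_length_add_succ] at hi'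
    exact absurd (hva x (mem_of_getElem? hi')) (hi ▸ lt_irrefl a)
  · obtain ⟨m, rfl⟩ : ∃ m, i = u.length + (m + 1) := ⟨i - u.length - 1, by omega⟩
    obtain ⟨m', rfl⟩ : ∃ m', i' = u.length + (m' + 1) := ⟨i' - u.length - 1, by omega⟩
    rw [getElem?_append_cons_length_add_succ] at hi hi'
    obtain ⟨k, y, hmk, hkm', hk, hxy⟩ := hv m m' x (by omega) hi hi'
    refine ⟨u.length + (k + 1), y, by omega, by omega, ?_, hxy⟩
    rwa [getElem?_append_cons_length_add_succ]

end List

theorem badWord_lt (n : ℕ) : ∀ x ∈ badWord n, x < n + 1 := by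
  induction n with
  | zero => simp [badWord]
  | succ n ih =>
    simp only [badWord, List.mem_append, List.mem_singleton]
    rintro x ((hx | rfl) | hx) <;> grind

theorem eqLettersSeparated_badWord (n : ℕ) : (badWord n).EqLettersSeparated := by
  induction n with
  | zero => exact List.eqLettersSeparated_singleton 0
  | succ n ih =>
    rw [badWord, List.append_assoc, List.singleton_append]
    exact ih.append_cons ih (badWord_lt n) (badWord_lt n)

theorem badWord_no_bad_pair (n j : ℕ) :
    ¬ ∃ i i', i < i' ∧ i' < (badWord n).length ∧
      (badWord n).getD i 0 = j ∧ (badWord n).getD i' 0 = j ∧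
      ∀ i'', i < i'' → i'' < i' → (badWord n).getD i'' 0 < j := by
  rintro ⟨i, i', hii', hi'len, hi, hi', hbetween⟩
  have getElem?_of_getD {m x : ℕ} (hm : m < (badWord n).length)
      (hx : (badWord n).getD m 0 = x) : (badWord n)[m]? = some x := by
    rw [List.getElem?_eq_getElem hm, ← hx, List.getD_eq_getElem _ _ hm]
  obtain ⟨k, y, hik, hki', hk, hjy⟩ := eqLettersSeparated_badWord n i i' j hii'
    (getElem?_of_getD (by omega) hi) (getElem?_of_getD hi'len hi')
  have hky : (badWord n).getD k 0 = y := by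
    rw [List.getD_eq_getElem?_getD, hk, Option.getD_some]
  exact absurd (hbetween k hik hki') (by omega)
end

section
/- Let x : ℕ → Fin m be an infinite word and let j be the maximal letter occurring infinitely often in x. Then x contains infinitely many pairwise disjoint bad j-pairs (for every N there is a bad j-pair with both positions > N). -/
theorem infinitely_many_bad_pairs (m : ℕ) (x : ℕ → Fin m) (j : Fin m)
    (hinf : {i | x i = j}.Infinite)
    (hmax : ∀ j' : Fin m, {i | x i = j'}.Infinite → j' ≤ j) :
    ∀ N, ∃ i i', N < i ∧ i < i' ∧ x i = j ∧ x i' = j ∧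
      ∀ i'', i < i'' → i'' < i' → x i'' < j := by
  -- The set of positions with letter > j is finite
  have hS : {i : ℕ | j < x i}.Finite := by
    have hsub : {i : ℕ | j < x i} ⊆ ⋃ j' ∈ {j' : Fin m | j < j'}, {i | x i = j'} := by
      intro i hi
      exact Set.mem_biUnion hi rfl
    refine Set.Finite.subset (Set.Finite.biUnion (Set.toFinite _) ?_) hsub
    intro j' hj'
    by_contra hcon
    rw [← Set.not_infinite, not_not] at hcon
    exact absurd (hmax j' hcon) (not_le.mpr hj')
  obtain ⟨M, hM⟩ := hS.bddAbove
  have hle : ∀ i, M < i → x i ≤ j := by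
    intro i hi
    by_contra h
    exact absurd (hM (not_le.mp h)) (not_le.mpr hi)
  intro N
  obtain ⟨i, hij, hiN⟩ := hinf.exists_gt (max N M)
  have hNi : N < i := lt_of_le_of_lt (le_max_left _ _) hiN
  have hMi : M < i := lt_of_le_of_lt (le_max_right _ _) hiN
  have hex : ∃ n, i < n ∧ x n = j := by
    obtain ⟨n, hnj, hni⟩ := hinf.exists_gt i
    exact ⟨n, hni, hnj⟩
  classical
  let i' := Nat.find hex
  obtain ⟨hii', hi'j⟩ := Nat.find_spec hex
  refine ⟨i, i', hNi, hii', hij, hi'j, ?_⟩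
  intro i'' h1 h2
  have hne : x i'' ≠ j := by
    intro h
    exact (Nat.find_min hex h2) ⟨h1, h⟩
  exact lt_of_le_of_ne (hle i'' (hMi.trans h1)) hne
end

section
/- Let c : ℕ → Bool be k-spaced (infinitely many change points and every block has length at least k) and let i be any position. If there exists a position i' with i ≤ i' ≤ i + k such that some property P holds at i', then there exists a position i'' ≥ i with P holding at i'' such that at most one change point lies in the interval (i, i''] (i.e., P holds 'within at most one color change' from i). -/
def ChangePoint (c : ℕ → Bool) (i : ℕ) : Prop := i = 0 ∨ c (i - 1) ≠ c i

/-- Every maximal constant block of `c` has length at most `k`: after any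
position there is a change point within the next `k` positions. -/
def KBounded (c : ℕ → Bool) (k : ℕ) : Prop :=
  ∀ i, ∃ j, i < j ∧ j ≤ i + k ∧ ChangePoint c j

/-- `c` has infinitely many change points and every block has length at least `k`. -/
def KSpaced (c : ℕ → Bool) (k : ℕ) : Prop :=
  (∀ N, ∃ j, N ≤ j ∧ ChangePoint c j) ∧
  ∀ j j', j < j' → ChangePoint c j → ChangePoint c j' →
    (∀ l, j < l → l < j' → ¬ ChangePoint c l) → k ≤ j' - j

namespace KSpaced

variable {c : ℕ → Bool} {k : ℕ}

/-- The definition only bounds the distance between *consecutive* change points; compare `b`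
with the first change point after `a`. -/
theorem le_sub_of_lt (hs : KSpaced c k) {a b : ℕ} (hab : a < b) (ha : ChangePoint c a)
    (hb : ChangePoint c b) : k ≤ b - a := by
  classical
  have hnext : ∃ l, a < l ∧ ChangePoint c l := ⟨b, hab, hb⟩
  obtain ⟨ha_lt, hcp⟩ := Nat.find_spec hnext
  have hle : Nat.find hnext ≤ b := Nat.find_min' hnext ⟨hab, hb⟩
  have hgap : k ≤ Nat.find hnext - a :=
    hs.2 a _ ha_lt ha hcp fun l hal hl hcl => Nat.find_min hnext hl ⟨hal, hcl⟩
  omega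

theorem eq_of_lt_of_le_add (hs : KSpaced c k) {i j j' : ℕ} (hj : ChangePoint c j)
    (hj' : ChangePoint c j') (hij : i < j) (hij' : i < j') (hjk : j ≤ i + k) (hjk' : j' ≤ i + k) :
    j = j' := by
  rcases lt_trichotomy j j' with h | h | h
  · have := hs.le_sub_of_lt h hj hj'
    omega
  · exact h
  · have := hs.le_sub_of_lt h hj' hj
    omega

end KSpaced

theorem spaced_within_one_change_general (c : ℕ → Bool) (k : ℕ)
    (hs : KSpaced c k) (P : ℕ → Prop) (i : ℕ)
    (hP : ∃ i', i ≤ i' ∧ i' ≤ i + k ∧ P i') :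
    ∃ i'', i ≤ i'' ∧ P i'' ∧
      ∀ j j', i < j → j ≤ i'' → ChangePoint c j →
        i < j' → j' ≤ i'' → ChangePoint c j' → j = j' := by
  obtain ⟨i', hii', hi'k, hPi'⟩ := hP
  exact ⟨i', hii', hPi', fun j j' hij hji' hj hij' hj'i' hj' =>
    hs.eq_of_lt_of_le_add hj hj' hij hij' (hji'.trans hi'k) (hj'i'.trans hi'k)⟩

theorem spaced_within_one_change (c : ℕ → Bool) (k : ℕ) (hk : 1 ≤ k)
    (hs : KSpaced c k) (P : ℕ → Prop) (i : ℕ)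
    (hP : ∃ i', i ≤ i' ∧ i' ≤ i + k ∧ P i') :
    ∃ i'', i ≤ i'' ∧ P i'' ∧
      ∀ j j', i < j → j ≤ i'' → ChangePoint c j →
        i < j' → j' ≤ i'' → ChangePoint c j' → j = j' :=
  spaced_within_one_change_general c k hs P i hP
end

section
/- Every finite word of length exactly 2^m over Fin m contains a bad j-pair for some j, and 2^m is optimal: the word w_{m-1} of length 2^m - 1 contains no bad j-pair for any j. Hence the minimal length L(m) such that every word over Fin m of length L(m) contains a bad j-pair equals 2^m. -/
/-!
Lower bound: in a window of length `2 ^ (m + 1)` over letters `< m + 1`, either the top letter `m`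
occurs in both halves, and its first occurrence together with the next one is a bad `m`-pair, or
one half avoids `m` and induction applies to it. Optimality: `w_j = w_{j-1} · j · w_{j-1}` has no
bad pair, since a pair inside one copy of `w_{j-1}` is not bad by induction, and a pair that meets
or straddles the middle letter `j` is blocked by it, all other letters being smaller.
-/

def IsBadPair {α : Type*} [LT α] (x : ℕ → α) (j : α) (i i' : ℕ) : Prop :=
  i < i' ∧ x i = j ∧ x i' = j ∧ ∀ k, i < k → k < i' → x k < j

section IsBadPair

variable {α : Type*} {x y : ℕ → α} {j : α} {i i' : ℕ}

theorem IsBadPair.congr [LT α] (h : IsBadPair x j i i')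
    (hxy : ∀ k, i ≤ k → k ≤ i' → x k = y k) : IsBadPair y j i i' := by
  obtain ⟨hii', hxi, hxi', hmid⟩ := h
  refine ⟨hii', ?_, ?_, fun k hk hk' => ?_⟩
  · rw [← hxy i le_rfl hii'.le, hxi]
  · rw [← hxy i' hii'.le le_rfl, hxi']
  · rw [← hxy k hk.le hk'.le]
    exact hmid k hk hk'

theorem IsBadPair.shift [LT α] {n : ℕ} (h : IsBadPair x j i i') (hn : n ≤ i) :
    IsBadPair (fun k => x (k + n)) j (i - n) (i' - n) := by
  obtain ⟨hii', hxi, hxi', hmid⟩ := h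
  refine ⟨by omega, ?_, ?_, fun k hk hk' => hmid (k + n) (by omega) (by omega)⟩
  · dsimp only; rwa [Nat.sub_add_cancel hn]
  · dsimp only; rwa [Nat.sub_add_cancel (hn.trans hii'.le)]

theorem StrictMono.isBadPair_comp_iff [LinearOrder α] {β : Type*} [Preorder β] {f : α → β}
    (hf : StrictMono f) : IsBadPair (fun k => f (x k)) (f j) i i' ↔ IsBadPair x j i i' := by
  simp only [IsBadPair, hf.injective.eq_iff, hf.lt_iff_lt]

theorem exists_isBadPair_of_eq [LinearOrder α] {p q : ℕ} (hpq : p < q) (hp : x p = j)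
    (hq : x q = j) (hle : ∀ k, p < k → k < q → x k ≤ j) : ∃ q' ≤ q, IsBadPair x j p q' := by
  classical
  have hex : ∃ q', p < q' ∧ x q' = j := ⟨q, hpq, hq⟩
  obtain ⟨hpq', hxq'⟩ := Nat.find_spec hex
  have hq'q : Nat.find hex ≤ q := Nat.find_min' hex ⟨hpq, hq⟩
  refine ⟨Nat.find hex, hq'q, hpq', hp, hxq', fun k hk hk' => ?_⟩
  exact (hle k hk (by omega)).lt_of_ne fun hxk => Nat.find_min hex hk' ⟨hk, hxk⟩

end IsBadPair

theorem exists_isBadPair_of_lt_two_pow (x : ℕ → ℕ) (m a : ℕ)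
    (hx : ∀ i, a ≤ i → i < a + 2 ^ m → x i < m) :
    ∃ j i i', a ≤ i ∧ i' < a + 2 ^ m ∧ IsBadPair x j i i' := by
  induction m generalizing a with
  | zero => exact absurd (hx a le_rfl (by simp)) (Nat.not_lt_zero _)
  | succ m ih =>
    have hpow : a + 2 ^ (m + 1) = a + 2 ^ m + 2 ^ m := by ring
    rw [hpow] at hx ⊢
    have hlt : ∀ i, a ≤ i → i < a + 2 ^ m + 2 ^ m → x i ≠ m → x i < m :=
      fun i h h' hne => (Nat.lt_succ_iff.mp (hx i h h')).lt_of_ne hne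
    by_cases hfirst : ∃ p, a ≤ p ∧ p < a + 2 ^ m ∧ x p = m
    · obtain ⟨p, hap, hp, hxp⟩ := hfirst
      by_cases hsecond : ∃ q, a + 2 ^ m ≤ q ∧ q < a + 2 ^ m + 2 ^ m ∧ x q = m
      · obtain ⟨q, hq, hq', hxq⟩ := hsecond
        obtain ⟨q', hq'q, hbad⟩ := exists_isBadPair_of_eq (by omega) hxp hxq
          fun k hk hk' => Nat.lt_succ_iff.mp (hx k (by omega) (by omega))
        exact ⟨m, p, q', hap, by omega, hbad⟩
      · push Not at hsecond
        obtain ⟨j, i, i', hi, hi', hbad⟩ :=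
          ih (a + 2 ^ m) fun i h h' => hlt i (by omega) h' (hsecond i h h')
        exact ⟨j, i, i', by omega, hi', hbad⟩
    · push Not at hfirst
      obtain ⟨j, i, i', hi, hi', hbad⟩ :=
        ih a fun i h h' => hlt i h (by omega) (hfirst i h h')
      exact ⟨j, i, i', hi, hi'.trans_le (Nat.le_add_right _ _), hbad⟩

theorem exists_isBadPair_fin {m : ℕ} (x : ℕ → Fin m) :
    ∃ j i i', i' < 2 ^ m ∧ IsBadPair x j i i' := by
  obtain ⟨j, i, i', -, hi', hbad⟩ :=
    exists_isBadPair_of_lt_two_pow (fun k => (x k : ℕ)) m 0 fun k _ _ => (x k).isLt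
  obtain rfl : (x i : ℕ) = j := hbad.2.1
  exact ⟨x i, i, i', by omega, Fin.val_strictMono.isBadPair_comp_iff.mp hbad⟩

theorem List.getD_mem {α : Type*} {l : List α} {n : ℕ} (d : α) (hn : n < l.length) :
    l.getD n d ∈ l :=
  l.getD_eq_getElem d hn ▸ l.getElem_mem hn

/-- Reading `w` with `0` past its end needs the bound `i' < w.length`: padded, `[0]` would have
the bad pair `0, 0`. -/
def HasBadPair (w : List ℕ) : Prop :=
  ∃ j i i', i' < w.length ∧ IsBadPair (w.getD · 0) j i i'

theorem not_hasBadPair_append_singleton_append {u v : List ℕ} {c : ℕ} (hu : ¬HasBadPair u)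
    (hv : ¬HasBadPair v) (huc : ∀ a ∈ u, a < c) (hvc : ∀ a ∈ v, a < c) :
    ¬HasBadPair (u ++ [c] ++ v) := by
  rintro ⟨j, i, i', hi', hbad⟩
  set L := u.length
  have hlen : (u ++ [c] ++ v).length = L + 1 + v.length := by simp [L]; omega
  have hleft : ∀ k < L, (u ++ [c] ++ v).getD k 0 = u.getD k 0 := fun k hk => by
    rw [List.getD_append _ _ _ _ (by simp; omega), List.getD_append _ _ _ _ hk]
  have hmid : (u ++ [c] ++ v).getD L 0 = c := by
    rw [List.getD_append _ _ _ _ (by simp [L]), List.getD_append_right _ _ _ _ le_rfl]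
    simp
  have hright : (fun k => (u ++ [c] ++ v).getD (k + (L + 1)) 0) = (v.getD · 0) := by
    ext k
    rw [List.getD_append_right _ _ _ _ (by simp; omega)]
    simp [L]
  have hlt : ∀ k < (u ++ [c] ++ v).length, k ≠ L → (u ++ [c] ++ v).getD k 0 < c := by
    intro k hk hkL
    rcases Nat.lt_or_gt_of_ne hkL with hkL | hkL
    · rw [hleft k hkL]
      exact huc _ (List.getD_mem 0 hkL)
    · rw [show k = (k - (L + 1)) + (L + 1) by omega, congrFun hright]
      exact hvc _ (List.getD_mem 0 (by omega))
  rcases lt_or_ge i' L with hi'L | hLi'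
  · exact hu ⟨j, i, i', hi'L, hbad.congr fun k _ hk => hleft k (by omega)⟩
  rcases lt_or_ge L i with hLi | hiL
  · refine hv ⟨j, i - (L + 1), i' - (L + 1), by have := hbad.1; omega, ?_⟩
    rw [← hright]
    exact hbad.shift hLi
  -- the middle letter `c` lies in the closed interval `[i, i']` and exceeds the other letters
  obtain ⟨hii', hxi, hxi', hbetween⟩ := hbad
  dsimp only at hxi hxi' hbetween
  rcases hiL.eq_or_lt with rfl | hiL
  · have := hlt i' (by omega) (by omega)
    rw [hmid] at hxi
    omega
  rcases hLi'.eq_or_lt with rfl | hLi'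
  · have := hlt i (by omega) (by omega)
    rw [hmid] at hxi'
    omega
  have hcj := hbetween L hiL hLi'
  have hic := hlt i (by omega) (by omega)
  rw [hmid] at hcj
  omega

theorem badWord_length (j : ℕ) : (badWord j).length = 2 ^ (j + 1) - 1 := by
  induction j with
  | zero => simp [badWord]
  | succ j ih =>
    simp only [badWord, List.length_append, List.length_singleton, ih]
    have : 1 ≤ 2 ^ (j + 1) := Nat.one_le_two_pow
    rw [pow_succ 2 (j + 1)]
    omega

theorem le_of_mem_badWord {j a : ℕ} (ha : a ∈ badWord j) : a ≤ j := by
  induction j with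
  | zero => simpa [badWord] using ha
  | succ j ih =>
    simp only [badWord, List.mem_append, List.mem_singleton] at ha
    rcases ha with (ha | rfl) | ha
    · exact (ih ha).trans j.le_succ
    · exact le_rfl
    · exact (ih ha).trans j.le_succ

theorem badWord_getD_le (j i : ℕ) : (badWord j).getD i 0 ≤ j := by
  rcases lt_or_ge i (badWord j).length with hi | hi
  · exact le_of_mem_badWord (List.getD_mem 0 hi)
  · rw [List.getD_eq_default _ _ hi]
    exact j.zero_le

theorem not_hasBadPair_badWord (j : ℕ) : ¬HasBadPair (badWord j) := by
  induction j with
  | zero =>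
    rintro ⟨_, i, i', hi', hii', -⟩
    simp only [badWord, List.length_singleton] at hi'
    omega
  | succ j ih =>
    have hlt : ∀ a ∈ badWord j, a < j + 1 := fun a ha => Nat.lt_succ_of_le (le_of_mem_badWord ha)
    exact not_hasBadPair_append_singleton_append ih ih hlt hlt

theorem bad_pair_threshold (m : ℕ) (hm : 1 ≤ m) :
    (∀ x : ℕ → Fin m, ∃ (j : Fin m) (i i' : ℕ), i < i' ∧ i' < 2 ^ m ∧
        x i = j ∧ x i' = j ∧ ∀ i'', i < i'' → i'' < i' → x i'' < j) ∧
    ((badWord (m - 1)).length = 2 ^ m - 1 ∧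
      ¬ ∃ i i' j, i < i' ∧ i' < (badWord (m - 1)).length ∧
        (badWord (m - 1)).getD i 0 = j ∧ (badWord (m - 1)).getD i' 0 = j ∧
        ∀ i'', i < i'' → i'' < i' → (badWord (m - 1)).getD i'' 0 < j) ∧
    IsLeast {L : ℕ | ∀ x : ℕ → Fin m, ∃ (j : Fin m) (i i' : ℕ), i < i' ∧ i' < L ∧
        x i = j ∧ x i' = j ∧ ∀ i'', i < i'' → i'' < i' → x i'' < j} (2 ^ m) := by
  have hexists : ∀ x : ℕ → Fin m, ∃ (j : Fin m) (i i' : ℕ), i < i' ∧ i' < 2 ^ m ∧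
      x i = j ∧ x i' = j ∧ ∀ i'', i < i'' → i'' < i' → x i'' < j := fun x => by
    obtain ⟨j, i, i', hi', hii', hxi, hxi', hmid⟩ := exists_isBadPair_fin x
    exact ⟨j, i, i', hii', hi', hxi, hxi', hmid⟩
  have hlen : (badWord (m - 1)).length = 2 ^ m - 1 := by
    rw [badWord_length, Nat.sub_add_cancel hm]
  refine ⟨hexists, ⟨hlen, fun ⟨i, i', j, hii', hi', hxi, hxi', hmid⟩ =>
    not_hasBadPair_badWord (m - 1) ⟨j, i, i', hi', hii', hxi, hxi', hmid⟩⟩, hexists, ?_⟩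
  intro L hL
  by_contra! hLm
  let x : ℕ → Fin m := fun k => ⟨(badWord (m - 1)).getD k 0, by
    have := badWord_getD_le (m - 1) k; omega⟩
  obtain ⟨j, i, i', hii', hi', hxi, hxi', hmid⟩ := hL x
  refine not_hasBadPair_badWord (m - 1) ⟨j, i, i', by omega, ?_⟩
  exact Fin.val_strictMono.isBadPair_comp_iff.mpr ⟨hii', hxi, hxi', hmid⟩
end
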